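/- Let m ≥ 3 and N ≥ 2 be integers, let x₀, x₁, x₂ ∈ ℂ with |x_j| ≥ √2 for j = 0,1,2, and let a_i, b_i, c_i ∈ ℂ^m (i = 1,…,N−2) be arbitrary vectors. In ℂ^m ⊗ ℂ^{3N} (standard basis e₀,…,e_{3N−1} of ℂ^{3N}), define v₁ = e₁⊗e₂ + e₂⊗e₁ + x₀·e₀⊗e₃ + ∑_{i=1}^{N−2} a_i⊗e_{3i+3}, v₂ = e₂⊗e₀ + e₀⊗e₂ + x₁·e₁⊗e₄ + ∑_{i=1}^{N−2} b_i⊗e_{3i+4}, and v₃ = e₀⊗e₁ + e₁⊗e₀ + x₂·e₂⊗e₅ + ∑_{i=1}^{N−2} c_i⊗e_{3i+5}. Then span{v₁, v₂, v₃} is a 3-dimensional entanglement-breaking subspace of ℂ^m ⊗ ℂ^{3N}. -/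

import Mathlib

open scoped BigOperators ComplexOrder
open Kronecker

noncomputable section

/-- The `j`-th standard basis vector of `ℂ^q` (zero if `j ≥ q`). -/
def ee (q : ℕ) (j : ℕ) : Fin q → ℂ := fun b => if (b : ℕ) = j then 1 else 0

/-- Tensor (Kronecker) product of two vectors. -/
def tens {A B : Type*} (x : A → ℂ) (y : B → ℂ) : A × B → ℂ := fun p => x p.1 * y p.2

/-- A matrix on `ℂ^A ⊗ ℂ^B` is separable if it is a finite sum of Kronecker products of
rank-one positive semidefinite matrices. -/
def IsSep {A B : Type*} (ρ : Matrix (A × B) (A × B) ℂ) : Prop :=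
  ∃ (T : ℕ) (x : Fin T → A → ℂ) (y : Fin T → B → ℂ),
    ρ = ∑ t : Fin T, Matrix.of (fun p q : A × B =>
      (x t p.1 * (starRingEnd ℂ) (x t q.1)) * (y t p.2 * (starRingEnd ℂ) (y t q.2)))

/-- Partial trace over the middle (B) system of the rank-one projection `|Ψ⟩⟨Ψ|`. -/
def TrB {A B : Type*} [Fintype B] {k : ℕ} (Ψ : A × B × Fin k → ℂ) :
    Matrix (A × Fin k) (A × Fin k) ℂ :=
  Matrix.of fun p q => ∑ b : B, Ψ (p.1, b, p.2) * (starRingEnd ℂ) (Ψ (q.1, b, q.2))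

/-- A subspace `V ⊆ ℂ^A ⊗ ℂ^B` is entanglement breaking if for every ancilla dimension
`k ≥ 1` and every `Ψ` whose slices all lie in `V`, the matrix `Tr_B |Ψ⟩⟨Ψ|` is separable. -/
def IsEBSpace {A B : Type*} [Fintype B] (V : Submodule ℂ (A × B → ℂ)) : Prop :=
  ∀ (k : ℕ), 1 ≤ k → ∀ Ψ : A × B × Fin k → ℂ,
    (∀ ℓ : Fin k, (fun ab : A × B => Ψ (ab.1, ab.2, ℓ)) ∈ V) → IsSep (TrB Ψ)

/-- Partial transpose on the B system. -/
def PT {A B : Type*} (ρ : Matrix (A × B) (A × B) ℂ) : Matrix (A × B) (A × B) ℂ :=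
  Matrix.of fun p q => ρ (p.1, q.2) (q.1, p.2)

/-- Partial trace over the B system of a matrix. -/
def trBmat {A B : Type*} [Fintype B] (ρ : Matrix (A × B) (A × B) ℂ) : Matrix A A ℂ :=
  Matrix.of fun a a' => ∑ b : B, ρ (a, b) (a', b)

/-- Partial trace over the A system of a matrix. -/
def trAmat {A B : Type*} [Fintype A] (ρ : Matrix (A × B) (A × B) ℂ) : Matrix B B ℂ :=
  Matrix.of fun b b' => ∑ a : A, ρ (a, b) (a, b')

/-
`Tr_B |Ψ⟩⟨Ψ|` is the sum over `b` of the rank-one projections onto the slices `Ψ(·, b, ·)`.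
Writing `Ψ(·, ·, ℓ) = ∑ⱼ cⱼ(ℓ) vⱼ`, a slice with `b ≥ 6` is a product vector, since `e_b` occurs in
only one of the `vⱼ`. The six remaining slices are `e_{j+2} ⊗ c_{j+1} + e_{j+1} ⊗ c_{j+2}` and
`xⱼ eⱼ ⊗ cⱼ` (indices mod 3). The projection onto `f ⊗ u + g ⊗ v` becomes separable once those onto
`f ⊗ v` and `g ⊗ u` are added; each `eⱼ ⊗ cⱼ` is needed twice, and `|xⱼ|² ≥ 2` supplies it.
-/

open Matrix

def ketBra {ι : Type*} (φ : ι → ℂ) : Matrix ι ι ℂ := vecMulVec φ (star φ)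

lemma ketBra_smul {ι : Type*} (c : ℂ) (φ : ι → ℂ) :
    ketBra (c • φ) = (c * starRingEnd ℂ c) • ketBra φ := by
  ext i j; simp [ketBra, vecMulVec_apply]; ring

lemma exists_ketBra_smul_eq_add_add {ι : Type*} {c : ℂ} (hc : Real.sqrt 2 ≤ ‖c‖) (φ : ι → ℂ) :
    ∃ r : ℂ, ketBra (c • φ) = ketBra φ + ketBra φ + ketBra (r • φ) := by
  refine ⟨(Real.sqrt (‖c‖ ^ 2 - 2) : ℂ), ?_⟩
  have h2 : 2 ≤ ‖c‖ ^ 2 := by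
    simpa using pow_le_pow_left₀ (Real.sqrt_nonneg 2) hc 2
  rw [ketBra_smul, ketBra_smul, Complex.mul_conj, Complex.conj_ofReal, ← Complex.ofReal_mul,
    Real.mul_self_sqrt (by linarith), Complex.normSq_eq_norm_sq]
  push_cast
  module

section Separable

variable {A B : Type*}

lemma isSep_zero : IsSep (0 : Matrix (A × B) (A × B) ℂ) :=
  ⟨0, Fin.elim0, Fin.elim0, by simp⟩

lemma IsSep.add {ρ σ : Matrix (A × B) (A × B) ℂ} (hρ : IsSep ρ) (hσ : IsSep σ) :
    IsSep (ρ + σ) := by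
  obtain ⟨T₁, x₁, y₁, rfl⟩ := hρ
  obtain ⟨T₂, x₂, y₂, rfl⟩ := hσ
  refine ⟨T₁ + T₂, Fin.append x₁ x₂, Fin.append y₁ y₂, ?_⟩
  simp [Fin.sum_univ_add]

lemma isSep_sum {ι : Type*} (s : Finset ι) {ρ : ι → Matrix (A × B) (A × B) ℂ}
    (h : ∀ i ∈ s, IsSep (ρ i)) : IsSep (∑ i ∈ s, ρ i) :=
  Finset.sum_induction _ IsSep (fun _ _ => IsSep.add) isSep_zero h

lemma isSep_ketBra_tens (f : A → ℂ) (u : B → ℂ) : IsSep (ketBra (tens f u)) :=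
  ⟨1, fun _ => f, fun _ => u, by ext p q; simp [ketBra, tens, vecMulVec_apply]; ring⟩

/- Witnesses `(f + iᵗ g) / 2 ⊗ (u + (-i)ᵗ v)`, `t = 0, …, 3`: summing over the fourth roots of
unity keeps, besides the four diagonal blocks, exactly the cross terms `f g* ⊗ u v*` and
`g f* ⊗ v u*`. -/
lemma isSep_ketBra_tens_add_add (f g : A → ℂ) (u v : B → ℂ) :
    IsSep (ketBra (tens f u + tens g v) + ketBra (tens f v) + ketBra (tens g u)) := by
  refine ⟨4,
    ![fun a => (f a + g a) / 2, fun a => (f a - Complex.I * g a) / 2,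
      fun a => (f a - g a) / 2, fun a => (f a + Complex.I * g a) / 2],
    ![fun b => u b + v b, fun b => u b + Complex.I * v b,
      fun b => u b - v b, fun b => u b - Complex.I * v b], ?_⟩
  ext p q
  simp only [Fin.sum_univ_four, ketBra, tens, Matrix.add_apply, Matrix.sum_apply, vecMulVec_apply,
    Pi.add_apply, Pi.star_apply, Matrix.of_apply, Matrix.cons_val_zero, Matrix.cons_val_one,
    Matrix.cons_val_two, Matrix.cons_val_three, Matrix.head_cons, Matrix.tail_cons, star_add,
    star_mul', RCLike.star_def, map_add, map_sub, map_mul, map_div₀, Complex.conj_I, map_ofNat]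
  ring_nf
  simp only [Complex.I_sq, Complex.I_pow_four]
  ring

end Separable

lemma smul_tens {A B : Type*} (c : ℂ) (f : A → ℂ) (u : B → ℂ) : c • tens f u = tens (c • f) u := by
  ext p; simp [tens, mul_assoc]

lemma isSep_cyclic_triangle {A B : Type*} (f : Fin 3 → A → ℂ) (u : Fin 3 → B → ℂ)
    (x : Fin 3 → ℂ) (hx : ∀ j, Real.sqrt 2 ≤ ‖x j‖) :
    IsSep (∑ j, ketBra (tens (f (j + 2)) (u (j + 1)) + tens (f (j + 1)) (u (j + 2)))
      + ∑ j, ketBra (x j • tens (f j) (u j))) := by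
  choose r hr using fun j => exists_ketBra_smul_eq_add_add (hx j) (tens (f j) (u j))
  have hshift (s : Fin 3) : ∑ j, ketBra (tens (f (j + s)) (u (j + s))) =
      ∑ j, ketBra (tens (f j) (u j)) :=
    Equiv.sum_comp (Equiv.addRight s) fun j => ketBra (tens (f j) (u j))
  have hsplit : ∑ j, ketBra (tens (f (j + 2)) (u (j + 1)) + tens (f (j + 1)) (u (j + 2)))
      + ∑ j, ketBra (x j • tens (f j) (u j)) =
      ∑ j, (ketBra (tens (f (j + 2)) (u (j + 1)) + tens (f (j + 1)) (u (j + 2)))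
        + ketBra (tens (f (j + 2)) (u (j + 2))) + ketBra (tens (f (j + 1)) (u (j + 1))))
      + ∑ j, ketBra (r j • tens (f j) (u j)) := by
    simp only [hr, Finset.sum_add_distrib, hshift]
    abel
  rw [hsplit]
  exact (isSep_sum _ fun j _ => isSep_ketBra_tens_add_add _ _ _ _).add
    (isSep_sum _ fun j _ => smul_tens (r j) (f j) (u j) ▸ isSep_ketBra_tens _ _)

lemma TrB_eq_sum_ketBra_of_mem_span {A B ι : Type*} [Fintype B] [Fintype ι] {k : ℕ}
    (v : ι → A × B → ℂ) (Ψ : A × B × Fin k → ℂ)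
    (hΨ : ∀ ℓ, (fun ab : A × B => Ψ (ab.1, ab.2, ℓ)) ∈ Submodule.span ℂ (Set.range v)) :
    ∃ c : ι → Fin k → ℂ, TrB Ψ = ∑ b, ketBra (∑ i, tens (fun a => v i (a, b)) (c i)) := by
  choose c hc using fun ℓ => (Submodule.mem_span_range_iff_exists_fun ℂ).1 (hΨ ℓ)
  have hΨc (a : A) (b : B) (ℓ : Fin k) : Ψ (a, b, ℓ) = ∑ i, c ℓ i * v i (a, b) := by
    simpa using (congrFun (hc ℓ) (a, b)).symm
  refine ⟨fun i ℓ => c ℓ i, ?_⟩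
  ext p q
  simp only [TrB, ketBra, tens, Matrix.of_apply, Matrix.sum_apply, vecMulVec_apply, Pi.star_apply,
    Finset.sum_apply, RCLike.star_def, hΨc]
  simp_rw [mul_comm (c _ _)]

/- The statement's `v₁, v₂, v₃` are `ebVec x ![a, b, c] j` for `j = 0, 1, 2`; the indices `j + 1`,
`j + 2` of the first two terms are taken in `Fin 3`. -/
def ebVec {m N : ℕ} (x : Fin 3 → ℂ) (y : Fin 3 → Fin (N - 2) → Fin m → ℂ) (j : Fin 3) :
    Fin m × Fin (3 * N) → ℂ := fun p =>
  ee m ↑(j + 1) p.1 * ee (3 * N) ↑(j + 2) p.2 + ee m ↑(j + 2) p.1 * ee (3 * N) ↑(j + 1) p.2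
    + x j * ee m j p.1 * ee (3 * N) (3 + j) p.2
    + ∑ i : Fin (N - 2), y j i p.1 * ee (3 * N) (3 * ((i : ℕ) + 1) + 3 + j) p.2

lemma triple_eq_range_ebVec {m N : ℕ} (x : Fin 3 → ℂ) (a b c : Fin (N - 2) → Fin m → ℂ) :
    ({fun p : Fin m × Fin (3 * N) =>
          ee m 1 p.1 * ee (3 * N) 2 p.2 + ee m 2 p.1 * ee (3 * N) 1 p.2
          + x 0 * ee m 0 p.1 * ee (3 * N) 3 p.2
          + ∑ i : Fin (N - 2), a i p.1 * ee (3 * N) (3 * ((i : ℕ) + 1) + 3) p.2,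
        fun p : Fin m × Fin (3 * N) =>
          ee m 2 p.1 * ee (3 * N) 0 p.2 + ee m 0 p.1 * ee (3 * N) 2 p.2
          + x 1 * ee m 1 p.1 * ee (3 * N) 4 p.2
          + ∑ i : Fin (N - 2), b i p.1 * ee (3 * N) (3 * ((i : ℕ) + 1) + 4) p.2,
        fun p : Fin m × Fin (3 * N) =>
          ee m 0 p.1 * ee (3 * N) 1 p.2 + ee m 1 p.1 * ee (3 * N) 0 p.2
          + x 2 * ee m 2 p.1 * ee (3 * N) 5 p.2
          + ∑ i : Fin (N - 2), c i p.1 * ee (3 * N) (3 * ((i : ℕ) + 1) + 5) p.2} :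
        Set (Fin m × Fin (3 * N) → ℂ)) = Set.range (ebVec x ![a, b, c]) := by
  rw [show ebVec x ![a, b, c] = ![ebVec x ![a, b, c] 0, ebVec x ![a, b, c] 1,
    ebVec x ![a, b, c] 2] from funext fun j => by fin_cases j <;> rfl, range_cons, range_cons,
    range_cons_empty, Set.singleton_union, Set.singleton_union]
  rfl

lemma ee_apply_of_ne {q j : ℕ} {b : Fin q} (h : (b : ℕ) ≠ j) : ee q j b = 0 := if_neg h

section EbVec

variable {m N k : ℕ} (x : Fin 3 → ℂ) (y : Fin 3 → Fin (N - 2) → Fin m → ℂ)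
  (c : Fin 3 → Fin k → ℂ)

lemma ebVec_apply_of_lt_six {b : Fin (3 * N)} (hb : (b : ℕ) < 6) (j : Fin 3) (z : Fin m) :
    ebVec x y j (z, b) = ee m ↑(j + 1) z * ee (3 * N) ↑(j + 2) b
      + ee m ↑(j + 2) z * ee (3 * N) ↑(j + 1) b + x j * ee m j z * ee (3 * N) (3 + j) b := by
  simp only [ebVec, add_eq_left]
  exact Finset.sum_eq_zero fun i _ => by rw [ee_apply_of_ne (by omega), mul_zero]

lemma ebVec_apply_eq_zero {b : Fin (3 * N)} (hb : 6 ≤ (b : ℕ)) {j : Fin 3} (hj : (b : ℕ) % 3 ≠ j)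
    (z : Fin m) : ebVec x y j (z, b) = 0 := by
  have h₁ := (j + 1).isLt
  have h₂ := (j + 2).isLt
  simp only [ebVec, ee_apply_of_ne (show (b : ℕ) ≠ ↑(j + 1) by omega),
    ee_apply_of_ne (show (b : ℕ) ≠ ↑(j + 2) by omega),
    ee_apply_of_ne (show (b : ℕ) ≠ 3 + j by omega), mul_zero, zero_add]
  exact Finset.sum_eq_zero fun i _ => by rw [ee_apply_of_ne (by omega), mul_zero]

lemma sum_tens_ebVec_of_val_eq {b : Fin (3 * N)} {j : Fin 3} (hb : (b : ℕ) = j) :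
    ∑ i, tens (fun z => ebVec x y i (z, b)) (c i)
      = tens (ee m ↑(j + 2)) (c (j + 1)) + tens (ee m ↑(j + 1)) (c (j + 2)) := by
  ext ⟨z, ℓ⟩
  simp only [Fin.sum_univ_three, tens, Finset.sum_apply, Pi.add_apply,
    ebVec_apply_of_lt_six x y (show (b : ℕ) < 6 by omega)]
  fin_cases j <;> simp [ee, hb, add_comm]

lemma sum_tens_ebVec_of_val_eq_three_add {b : Fin (3 * N)} {j : Fin 3} (hb : (b : ℕ) = 3 + j) :
    ∑ i, tens (fun z => ebVec x y i (z, b)) (c i) = x j • tens (ee m j) (c j) := by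
  ext ⟨z, ℓ⟩
  simp only [Fin.sum_univ_three, tens, Finset.sum_apply, Pi.smul_apply,
    ebVec_apply_of_lt_six x y (show (b : ℕ) < 6 by omega)]
  fin_cases j <;> simp [ee, hb]

lemma isSep_ketBra_sum_tens_ebVec_of_six_le {b : Fin (3 * N)} (hb : 6 ≤ (b : ℕ)) :
    IsSep (ketBra (∑ i, tens (fun z => ebVec x y i (z, b)) (c i))) := by
  set j : Fin 3 := ⟨b % 3, Nat.mod_lt _ (by norm_num)⟩
  rw [Fintype.sum_eq_single j fun i hi => ?_]
  · exact isSep_ketBra_tens _ _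
  · ext p
    simp [tens, ebVec_apply_eq_zero x y hb fun h => hi (Fin.ext h.symm)]

lemma isSep_sum_ketBra_ebVec (hN : 2 ≤ N) (hx : ∀ j, Real.sqrt 2 ≤ ‖x j‖) :
    IsSep (∑ b : Fin (3 * N), ketBra (∑ i, tens (fun z => ebVec x y i (z, b)) (c i))) := by
  have h : 3 + 3 + 3 * (N - 2) = 3 * N := by omega
  rw [← Equiv.sum_comp (finCongr h), Fin.sum_univ_add, Fin.sum_univ_add]
  refine IsSep.add ?_ (isSep_sum _ fun i _ => isSep_ketBra_sum_tens_ebVec_of_six_le x y c ?_)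
  · convert isSep_cyclic_triangle (fun j => ee m j) c x hx using 3 with j _ j _
    · exact congrArg ketBra (sum_tens_ebVec_of_val_eq x y c (by simp))
    · exact congrArg ketBra (sum_tens_ebVec_of_val_eq_three_add x y c (by simp [add_comm]))
  · simp

lemma ebVec_apply_succ_succ (hm : 3 ≤ m) (hN : 2 ≤ N) (i j : Fin 3) :
    ebVec x y i (⟨↑(j + 1), by omega⟩, ⟨↑(j + 2), by omega⟩) = if i = j then 1 else 0 := by
  rw [ebVec_apply_of_lt_six x y (by simp; omega)]
  fin_cases i <;> fin_cases j <;> simp [ee]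

lemma linearIndependent_ebVec (hm : 3 ≤ m) (hN : 2 ≤ N) : LinearIndependent ℂ (ebVec x y) := by
  refine Fintype.linearIndependent_iff.2 fun g hg j => ?_
  simpa [ebVec_apply_succ_succ x y hm hN] using
    congrFun hg (⟨↑(j + 1), by omega⟩, ⟨↑(j + 2), by omega⟩)

end EbVec

/-- An explicit 3-dimensional EB subspace of `ℂ^m ⊗ ℂ^{3N}` for any `m ≥ 3`, `N ≥ 2`. -/
theorem eb_three_dim_family {m N : ℕ} (hm : 3 ≤ m) (hN : 2 ≤ N)
    (x : Fin 3 → ℂ) (hx : ∀ j, Real.sqrt 2 ≤ ‖x j‖)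
    (a b c : Fin (N - 2) → Fin m → ℂ) :
    IsEBSpace (Submodule.span ℂ
      ({fun p : Fin m × Fin (3 * N) =>
          ee m 1 p.1 * ee (3 * N) 2 p.2 + ee m 2 p.1 * ee (3 * N) 1 p.2
          + x 0 * ee m 0 p.1 * ee (3 * N) 3 p.2
          + ∑ i : Fin (N - 2), a i p.1 * ee (3 * N) (3 * ((i : ℕ) + 1) + 3) p.2,
        fun p : Fin m × Fin (3 * N) =>
          ee m 2 p.1 * ee (3 * N) 0 p.2 + ee m 0 p.1 * ee (3 * N) 2 p.2
          + x 1 * ee m 1 p.1 * ee (3 * N) 4 p.2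
          + ∑ i : Fin (N - 2), b i p.1 * ee (3 * N) (3 * ((i : ℕ) + 1) + 4) p.2,
        fun p : Fin m × Fin (3 * N) =>
          ee m 0 p.1 * ee (3 * N) 1 p.2 + ee m 1 p.1 * ee (3 * N) 0 p.2
          + x 2 * ee m 2 p.1 * ee (3 * N) 5 p.2
          + ∑ i : Fin (N - 2), c i p.1 * ee (3 * N) (3 * ((i : ℕ) + 1) + 5) p.2} :
        Set (Fin m × Fin (3 * N) → ℂ))) ∧
    Module.finrank ℂ (Submodule.span ℂ
      ({fun p : Fin m × Fin (3 * N) =>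
          ee m 1 p.1 * ee (3 * N) 2 p.2 + ee m 2 p.1 * ee (3 * N) 1 p.2
          + x 0 * ee m 0 p.1 * ee (3 * N) 3 p.2
          + ∑ i : Fin (N - 2), a i p.1 * ee (3 * N) (3 * ((i : ℕ) + 1) + 3) p.2,
        fun p : Fin m × Fin (3 * N) =>
          ee m 2 p.1 * ee (3 * N) 0 p.2 + ee m 0 p.1 * ee (3 * N) 2 p.2
          + x 1 * ee m 1 p.1 * ee (3 * N) 4 p.2
          + ∑ i : Fin (N - 2), b i p.1 * ee (3 * N) (3 * ((i : ℕ) + 1) + 4) p.2,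
        fun p : Fin m × Fin (3 * N) =>
          ee m 0 p.1 * ee (3 * N) 1 p.2 + ee m 1 p.1 * ee (3 * N) 0 p.2
          + x 2 * ee m 2 p.1 * ee (3 * N) 5 p.2
          + ∑ i : Fin (N - 2), c i p.1 * ee (3 * N) (3 * ((i : ℕ) + 1) + 5) p.2} :
        Set (Fin m × Fin (3 * N) → ℂ))) = 3 := by
  rw [triple_eq_range_ebVec]
  refine ⟨fun k _ Ψ hΨ => ?_, ?_⟩
  · obtain ⟨c, hc⟩ := TrB_eq_sum_ketBra_of_mem_span _ Ψ hΨ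
    exact hc ▸ isSep_sum_ketBra_ebVec x _ c hN hx
  · rw [finrank_span_eq_card (linearIndependent_ebVec x _ hm hN), Fintype.card_fin]
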